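/- With V = r, H_0 = 2, H = (1-r_0^{-3})^{-1/2}(2-½r_0^{-3}), and dA = r_0²√(1-r_0^{-3}) dξ dθ on the torus Σ = {r_0}×T² with coordinate periods P_ξ, P_θ, the static Brown–York mass m_BY^S(Σ) = (1/8π)∫_Σ V(H_0 - H) dA equals -(1/16π) P_ξ P_θ + O(r_0^{-3}) as r_0 → ∞; in particular it is negative for all sufficiently large r_0. -/
import Mathlib


open Real

noncomputable section

lemma geon_f_bound (r0 : ℝ) (h : 2 ≤ r0) :
    |r0 * (2 - (Real.sqrt (1 - r0 ^ (-3 : ℤ)))⁻¹ * (2 - (1/2) * r0 ^ (-3 : ℤ)))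
      * (r0 ^ 2 * Real.sqrt (1 - r0 ^ (-3 : ℤ))) + 1/2| ≤ 2 * r0 ^ (-3 : ℤ) := by
  have hr : (0:ℝ) < r0 := by linarith
  set ε : ℝ := r0 ^ (-3 : ℤ) with hεdef
  have hεinv : ε = (r0^3)⁻¹ := by
    rw [hεdef, zpow_neg]; norm_cast
  have hr3 : (8:ℝ) ≤ r0^3 := by
    have := pow_le_pow_left₀ (by norm_num : (0:ℝ) ≤ 2) h 3
    norm_num at this; linarith
  have hε0 : 0 < ε := by rw [hεinv]; positivity
  have hε8 : ε ≤ 1/8 := by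
    rw [hεinv, inv_le_comm₀ (by linarith) (by norm_num)]
    linarith
  set s : ℝ := Real.sqrt (1 - ε) with hsdef
  have h1ε : (0:ℝ) < 1 - ε := by linarith
  have hs0 : 0 < s := Real.sqrt_pos.mpr h1ε
  have hs2 : s^2 = 1 - ε := Real.sq_sqrt (le_of_lt h1ε)
  have hsle : s ≤ 1 - ε/2 := by
    rw [hsdef]
    have h1 : (1:ℝ) - ε ≤ (1 - ε/2)^2 := by nlinarith
    calc Real.sqrt (1 - ε) ≤ Real.sqrt ((1 - ε/2)^2) := Real.sqrt_le_sqrt h1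
      _ = 1 - ε/2 := Real.sqrt_sq (by linarith)
  have hsge : 1 - ε/2 - ε^2 ≤ s := by
    have hx : (0:ℝ) < 1 - ε/2 - ε^2 := by
      nlinarith [mul_le_mul_of_nonneg_left hε8 hε0.le]
    rw [hsdef, Real.le_sqrt hx.le h1ε.le]
    nlinarith [mul_le_mul_of_nonneg_left hε8 hε0.le]
  have hfeq : r0 * (2 - s⁻¹ * (2 - (1/2) * ε)) * (r0 ^ 2 * s)
      = ε⁻¹ * (2*s - 2 + ε/2) := by
    have h3 : ε⁻¹ = r0^3 := by rw [hεinv, inv_inv]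
    rw [h3]
    field_simp
    ring
  rw [hfeq, abs_le]
  have hinv0 : (0:ℝ) ≤ ε⁻¹ := (inv_pos.mpr hε0).le
  constructor
  · have hlow : ε⁻¹ * (-ε/2 - 2*ε^2) ≤ ε⁻¹ * (2*s - 2 + ε/2) :=
      mul_le_mul_of_nonneg_left (by nlinarith) hinv0
    have h2 : ε⁻¹ * (-ε/2 - 2*ε^2) = -1/2 - 2*ε := by field_simp
    rw [h2] at hlow; linarith
  · have hup : ε⁻¹ * (2*s - 2 + ε/2) ≤ ε⁻¹ * (-ε/2) :=
      mul_le_mul_of_nonneg_left (by linarith) hinv0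
    have h2 : ε⁻¹ * (-ε/2) = -1/2 := by field_simp
    rw [h2] at hup; nlinarith

/-- The static Brown–York mass `(1/8π)∫_Σ V(H₀ - H)dA` of the outer boundary
torus `Σ = {r₀} × T²` of the truncated Horowitz–Myers geon, computed with
`V = r₀`, `H₀ = 2`, `H = (1-r₀^{-3})^{-1/2}(2 - ½r₀^{-3})`,
`dA = r₀²√(1-r₀^{-3}) dξ dθ`, and coordinate periods `P_ξ`, `P_θ`. -/
def geonStaticBYMass (Pxi Ptheta r0 : ℝ) : ℝ :=
  (1 / (8 * π)) *
    (r0 * (2 - (Real.sqrt (1 - r0 ^ (-3 : ℤ)))⁻¹ * (2 - (1/2) * r0 ^ (-3 : ℤ)))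
      * (r0 ^ 2 * Real.sqrt (1 - r0 ^ (-3 : ℤ)))) * (Pxi * Ptheta)

/-- the static Brown–York mass of the outer torus equals
`-(1/16π)P_ξP_θ + O(r₀^{-3})` as `r₀ → ∞`; in particular it is negative for all
sufficiently large `r₀`. -/
theorem geon_static_BY_mass_negative (Pxi Ptheta : ℝ)
    (hPxi : 0 < Pxi) (hPtheta : 0 < Ptheta) :
    (∃ C R₀ : ℝ, 1 < R₀ ∧ ∀ r0 ≥ R₀,
      |geonStaticBYMass Pxi Ptheta r0 + (1 / (16 * π)) * (Pxi * Ptheta)|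
        ≤ C * r0 ^ (-3 : ℤ)) ∧
    (∃ R₁ : ℝ, 1 < R₁ ∧ ∀ r0 ≥ R₁, geonStaticBYMass Pxi Ptheta r0 < 0) := by
  have hπ : (0:ℝ) < π := Real.pi_pos
  have hπ1 : (1:ℝ) ≤ π := by linarith [Real.pi_gt_three]
  have hPP : 0 < Pxi * Ptheta := mul_pos hPxi hPtheta
  constructor
  · refine ⟨Pxi * Ptheta, 2, by norm_num, fun r0 hr0 => ?_⟩
    have hb := geon_f_bound r0 hr0
    set f : ℝ := r0 * (2 - (Real.sqrt (1 - r0 ^ (-3 : ℤ)))⁻¹ * (2 - (1/2) * r0 ^ (-3 : ℤ)))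
      * (r0 ^ 2 * Real.sqrt (1 - r0 ^ (-3 : ℤ))) with hfdef
    have heq : geonStaticBYMass Pxi Ptheta r0 + (1 / (16 * π)) * (Pxi * Ptheta)
        = (1 / (8 * π)) * (f + 1/2) * (Pxi * Ptheta) := by
      rw [geonStaticBYMass, ← hfdef]
      field_simp
      ring
    rw [heq, abs_mul, abs_mul, abs_of_pos hPP,
      abs_of_pos (by positivity : (0:ℝ) < 1 / (8 * π))]
    have hstep : 1 / (8 * π) * |f + 1/2| * (Pxi * Ptheta)
        ≤ 1 / (8 * π) * (2 * r0 ^ (-3 : ℤ)) * (Pxi * Ptheta) := by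
      apply mul_le_mul_of_nonneg_right _ hPP.le
      exact mul_le_mul_of_nonneg_left hb (by positivity)
    refine hstep.trans ?_
    have hε0 : (0:ℝ) ≤ r0 ^ (-3 : ℤ) := by
      apply zpow_nonneg; linarith
    rw [show Pxi * Ptheta * r0 ^ (-3:ℤ)
        = 1 * (Pxi * Ptheta * r0 ^ (-3:ℤ)) by ring]
    have h4π : 1 / (8 * π) * 2 ≤ 1 := by
      rw [div_mul_eq_mul_div, mul_comm]
      rw [div_le_one (by linarith)]
      linarith
    calc 1 / (8 * π) * (2 * r0 ^ (-3:ℤ)) * (Pxi * Ptheta)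
        = (1 / (8 * π) * 2) * (Pxi * Ptheta * r0 ^ (-3:ℤ)) := by ring
      _ ≤ 1 * (Pxi * Ptheta * r0 ^ (-3:ℤ)) := by
          apply mul_le_mul_of_nonneg_right h4π (by positivity)
  · refine ⟨2, by norm_num, fun r0 hr0 => ?_⟩
    have hb := geon_f_bound r0 hr0
    set f : ℝ := r0 * (2 - (Real.sqrt (1 - r0 ^ (-3 : ℤ)))⁻¹ * (2 - (1/2) * r0 ^ (-3 : ℤ)))
      * (r0 ^ 2 * Real.sqrt (1 - r0 ^ (-3 : ℤ))) with hfdef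
    have hr : (0:ℝ) < r0 := by linarith
    have hε8 : r0 ^ (-3 : ℤ) ≤ 1/8 := by
      have hr3 : (8:ℝ) ≤ r0^3 := by
        have := pow_le_pow_left₀ (by norm_num : (0:ℝ) ≤ 2) hr0 3
        norm_num at this; linarith
      have : r0 ^ (-3 : ℤ) = (r0^3)⁻¹ := by rw [zpow_neg]; norm_cast
      rw [this, inv_le_comm₀ (by linarith) (by norm_num)]
      linarith
    have hfle : f ≤ -1/4 := by
      have := (abs_le.mp hb).2
      linarith
    have : geonStaticBYMass Pxi Ptheta r0 = (1 / (8 * π)) * f * (Pxi * Ptheta) := by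
      rw [geonStaticBYMass, ← hfdef]
    rw [this]
    have h8 : (0:ℝ) < 1 / (8 * π) := by positivity
    exact mul_neg_of_neg_of_pos (mul_neg_of_pos_of_neg h8 (by linarith)) hPP
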